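/- arXiv:2209.11669 — 9 statements merged into one kernel-verified Lean document; each statement's English description precedes it below -/
import Mathlib

section
/- Let G be a finite connected simple graph with vertex set V and shortest-path distance d, let del : V → ℕ be a delay function, and let u ∈ V. Let c ∈ V attain the waiting time of u, i.e. del(c) + d(c,u) = wait(u). If w ∈ V lies on a shortest path from u to c, i.e. d(c,w) + d(w,u) = d(c,u), then for every natural number D, frontier^D(w) ⊆ frontier^D(u). -/
/-- The waiting time of `u`: `wait(u) = min_{v ∈ V} (del(v) + d(v,u))`. -/
noncomputable def waitT {V : Type*} [Fintype V] [Nonempty V]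
    (G : SimpleGraph V) (del : V → ℕ) (u : V) : ℕ :=
  Finset.univ.inf' Finset.univ_nonempty (fun v => del v + G.dist v u)

/-- The frontier of width `D` of `u`:
`frontier^D(u) = {v ∈ V : del(v) + d(v,u) ≤ wait(u) + D}`. -/
def frontierSet {V : Type*} [Fintype V] [Nonempty V]
    (G : SimpleGraph V) (del : V → ℕ) (D : ℕ) (u : V) : Set V :=
  {v | del v + G.dist v u ≤ waitT G del u + D}

/-- If `c` attains the waiting time of `u` and `w` lies on a shortest path from `u` to `c`,
then for every `D`, `frontier^D(w) ⊆ frontier^D(u)`. -/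
theorem stmt0 {V : Type*} [Fintype V] [Nonempty V]
    (G : SimpleGraph V) (hG : G.Connected) (del : V → ℕ)
    (u c w : V)
    (hc : del c + G.dist c u = waitT G del u)
    (hw : G.dist c w + G.dist w u = G.dist c u) :
    ∀ D : ℕ, frontierSet G del D w ⊆ frontierSet G del D u := by
  intro D v hv
  have hvw : del v + G.dist v w ≤ waitT G del w + D := hv
  have hww : waitT G del w ≤ del c + G.dist c w :=
    Finset.inf'_le _ (Finset.mem_univ c)
  have htri : G.dist v u ≤ G.dist v w + G.dist w u := hG.dist_triangle
  have hkey : waitT G del w + G.dist w u ≤ waitT G del u := by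
    calc waitT G del w + G.dist w u ≤ del c + G.dist c w + G.dist w u := by omega
    _ = del c + G.dist c u := by omega
    _ = waitT G del u := hc
  show del v + G.dist v u ≤ waitT G del u + D
  omega
end

section
/- Let G be a finite connected simple graph with vertex set V and shortest-path distance d, let del : V → ℕ be a delay function, and suppose V carries a linear order. For each z ∈ V let c_z denote the least element (in the linear order) of the set {v ∈ V : del(v) + d(v,z) = wait(z)}. If u ∈ V and w lies on a shortest path from u to c_u (i.e. d(c_u,w) + d(w,u) = d(c_u,u)), then del(c_u) + d(c_u,w) = wait(w) (so c_u ∈ frontier^0(w)), and moreover c_w = c_u. -/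
/-- `center G del z` is the least element (in the linear order on `V`) of the
set `{v ∈ V : del(v) + d(v,z) = wait(z)}`. -/
noncomputable def center {V : Type*} [Fintype V] [Nonempty V] [LinearOrder V]
    (G : SimpleGraph V) (del : V → ℕ) (z : V) : V :=
  (Finset.univ.filter (fun v => del v + G.dist v z = waitT G del z)).min' (by
    obtain ⟨v, -, hv⟩ := Finset.exists_mem_eq_inf' (Finset.univ_nonempty (α := V))
      (fun v => del v + G.dist v z)
    exact ⟨v, Finset.mem_filter.mpr ⟨Finset.mem_univ v, hv.symm⟩⟩)

lemma waitT_le {V : Type*} [Fintype V] [Nonempty V]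
    (G : SimpleGraph V) (del : V → ℕ) (u v : V) :
    waitT G del u ≤ del v + G.dist v u :=
  Finset.inf'_le _ (Finset.mem_univ v)

lemma center_spec {V : Type*} [Fintype V] [Nonempty V] [LinearOrder V]
    (G : SimpleGraph V) (del : V → ℕ) (z : V) :
    del (center G del z) + G.dist (center G del z) z = waitT G del z := by
  have := Finset.min'_mem (Finset.univ.filter
      (fun v => del v + G.dist v z = waitT G del z)) (by
    obtain ⟨v, -, hv⟩ := Finset.exists_mem_eq_inf' (Finset.univ_nonempty (α := V))
      (fun v => del v + G.dist v z)
    exact ⟨v, Finset.mem_filter.mpr ⟨Finset.mem_univ v, hv.symm⟩⟩)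
  exact (Finset.mem_filter.mp this).2

/-- If `w` lies on a shortest path from `u` to `c_u`, then
`del(c_u) + d(c_u,w) = wait(w)` (so `c_u ∈ frontier^0(w)`), and moreover `c_w = c_u`. -/
theorem stmt1 {V : Type*} [Fintype V] [Nonempty V] [LinearOrder V]
    (G : SimpleGraph V) (hG : G.Connected) (del : V → ℕ) (u w : V)
    (hw : G.dist (center G del u) w + G.dist w u = G.dist (center G del u) u) :
    del (center G del u) + G.dist (center G del u) w = waitT G del w ∧
      center G del w = center G del u := by
  set c := center G del u with hc
  have hcu : del c + G.dist c u = waitT G del u := center_spec G del u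
  have hle : waitT G del w ≤ del c + G.dist c w := waitT_le G del w c
  have hge : del c + G.dist c w ≤ waitT G del w := by
    have key : ∀ v : V, del c + G.dist c w ≤ del v + G.dist v w := by
      intro v
      have t : G.dist v u ≤ G.dist v w + G.dist w u := hG.dist_triangle
      have h1 : waitT G del u ≤ del v + G.dist v u := waitT_le G del u v
      omega
    obtain ⟨v, -, hv⟩ := Finset.exists_mem_eq_inf' (Finset.univ_nonempty (α := V))
      (fun v => del v + G.dist v w)
    calc del c + G.dist c w ≤ del v + G.dist v w := key v
      _ = waitT G del w := hv.symm
  have hmain : del c + G.dist c w = waitT G del w := le_antisymm hge hle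
  refine ⟨hmain, ?_⟩
  apply le_antisymm
  · exact Finset.min'_le _ _ (Finset.mem_filter.mpr ⟨Finset.mem_univ c, hmain⟩)
  · apply Finset.le_min'
    intro v hv
    rw [Finset.mem_filter] at hv
    have hvw : del v + G.dist v w = waitT G del w := hv.2
    have t : G.dist v u ≤ G.dist v w + G.dist w u := hG.dist_triangle
    have hvu : del v + G.dist v u = waitT G del u := by
      have h1 : waitT G del u ≤ del v + G.dist v u := waitT_le G del u v
      omega
    exact Finset.min'_le _ _ (Finset.mem_filter.mpr ⟨Finset.mem_univ v, hvu⟩)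
end

section
/- Let G be a finite connected simple graph with vertex set V and shortest-path distance d, let del : V → ℕ be a delay function, let V carry a linear order, and for each z ∈ V let c_z be the least element of {v ∈ V : del(v) + d(v,z) = wait(z)}. Let u ∈ V, let s ≥ 0 be a natural number, and let P be the set of vertices of a shortest path from u to c_u. Then for every y ∈ V such that d(w,y) ≤ s for some w ∈ P, one has c_y ∈ frontier^{2s}(u). Consequently, if |frontier^{2s}(u)| ≤ K, then the set {c_y : y ∈ V, ∃ w ∈ P with d(w,y) ≤ s} has at most K elements. -/
/-- Let `P` be the (support of a) shortest path from `u` to `c_u`.  Every `y` within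
distance `s` of `P` has `c_y ∈ frontier^{2s}(u)`; consequently, if
`|frontier^{2s}(u)| ≤ K`, the set `{c_y : y ∈ V, ∃ w ∈ P, d(w,y) ≤ s}` has at most
`K` elements. -/
theorem stmt3 {V : Type*} [Fintype V] [Nonempty V] [LinearOrder V]
    (G : SimpleGraph V) (hG : G.Connected) (del : V → ℕ)
    (u : V) (s : ℕ)
    (p : G.Walk u (center G del u)) (hp : p.length = G.dist u (center G del u)) :
    (∀ y : V, (∃ w ∈ p.support, G.dist w y ≤ s) →
        center G del y ∈ frontierSet G del (2 * s) u) ∧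
      ∀ K : ℕ, (frontierSet G del (2 * s) u).ncard ≤ K →
        ((center G del) '' {y | ∃ w ∈ p.support, G.dist w y ≤ s}).ncard ≤ K := by
  have hwait_le : ∀ z v : V, waitT G del z ≤ del v + G.dist v z := fun z v =>
    Finset.inf'_le _ (Finset.mem_univ v)
  have hcenter : ∀ z : V, del (center G del z) + G.dist (center G del z) z = waitT G del z := by
    intro z
    have := Finset.min'_mem (Finset.univ.filter (fun v => del v + G.dist v z = waitT G del z))
      (by
        obtain ⟨v, -, hv⟩ := Finset.exists_mem_eq_inf' (Finset.univ_nonempty (α := V))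
          (fun v => del v + G.dist v z)
        exact ⟨v, Finset.mem_filter.mpr ⟨Finset.mem_univ v, hv.symm⟩⟩)
    exact (Finset.mem_filter.mp this).2
  have hmain : ∀ y : V, (∃ w ∈ p.support, G.dist w y ≤ s) →
      center G del y ∈ frontierSet G del (2 * s) u := by
    intro y ⟨w, hw, hwy⟩
    -- d(u,w) + d(w,(center G del u)) = d(u,(center G del u))
    have hsplit : G.dist u w + G.dist w (center G del u) = G.dist u (center G del u) := by
      have h1 : G.dist u w ≤ (p.takeUntil w hw).length := SimpleGraph.dist_le _
      have h2 : G.dist w (center G del u) ≤ (p.dropUntil w hw).length := SimpleGraph.dist_le _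
      have h3 : (p.takeUntil w hw).length + (p.dropUntil w hw).length = p.length := by
        have h5 := congr_arg SimpleGraph.Walk.length (p.take_spec hw)
        rwa [SimpleGraph.Walk.length_append] at h5
      have h4 : G.dist u (center G del u) ≤ G.dist u w + G.dist w (center G del u) := hG.dist_triangle
      omega
    have htri1 : G.dist (center G del u) y ≤ G.dist (center G del u) w + G.dist w y := hG.dist_triangle
    have htri2 : G.dist y u ≤ G.dist y w + G.dist w u := hG.dist_triangle
    have hwaity : del (center G del y) + G.dist (center G del y) y ≤ del (center G del u) + G.dist (center G del u) y := by
      rw [hcenter y]; exact hwait_le y (center G del u)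
    have hkey : del (center G del y) + G.dist (center G del y) u ≤ del (center G del y) + G.dist (center G del y) y + G.dist y u := by
      have := hG.dist_triangle (u := (center G del y)) (v := y) (w := u)
      omega
    have hwcu : G.dist (center G del u) w = G.dist w (center G del u) := SimpleGraph.dist_comm ..
    have hyw : G.dist y w = G.dist w y := SimpleGraph.dist_comm ..
    have hwu : G.dist w u = G.dist u w := SimpleGraph.dist_comm ..
    have hcu2 : G.dist (center G del u) u = G.dist u (center G del u) := SimpleGraph.dist_comm ..
    have hwaitu : del (center G del u) + G.dist (center G del u) u = waitT G del u := hcenter u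
    show del (center G del y) + G.dist (center G del y) u ≤ waitT G del u + 2 * s
    omega
  refine ⟨hmain, fun K hK => le_trans (Set.ncard_le_ncard ?_ (Set.toFinite _)) hK⟩
  rintro _ ⟨y, hy, rfl⟩
  exact hmain y hy
end

section
/- (Inductive step of the Inner Potential Lemma.) Let k ≥ 1 and i ≥ 1 be integers and let U be a finite set with |U| = n. For each u ∈ U let d_u, a_u, d'_u be natural numbers with a_u ≤ k and d'_u ≤ d_u + a_u, and let b_u ∈ {0,1} be such that b_u = 0 implies d'_u = 0. Let M, M' be natural numbers. If ∑_{u∈U} b_u·e^{(d_u + a_u)/10} + 2^i·M' ≤ ∑_{u∈U} (1 − a_u/(10k))^k·e^{(d_u + a_u)/10} + 2^{i−1}·M, then ∑_{u∈U} e^{d'_u/10} + 2^i·M' ≤ ∑_{u∈U} e^{d_u/10} + 2^{i−1}·M + n. -/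
/-- Inductive step of the Inner Potential Lemma (abstract arithmetic form):
if `∑_u b_u·e^{(d_u+a_u)/10} + 2^i·M' ≤ ∑_u (1 − a_u/(10k))^k·e^{(d_u+a_u)/10} + 2^{i−1}·M`,
with `a_u ≤ k`, `d'_u ≤ d_u + a_u`, `b_u ∈ {0,1}` and `b_u = 0 → d'_u = 0`, then
`∑_u e^{d'_u/10} + 2^i·M' ≤ ∑_u e^{d_u/10} + 2^{i−1}·M + n`. -/
theorem stmt6 {ι : Type*} [Fintype ι]
    (k i : ℕ) (hk : 1 ≤ k) (hi : 1 ≤ i)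
    (n : ℕ) (hn : Fintype.card ι = n)
    (d a d' : ι → ℕ)
    (ha : ∀ u, a u ≤ k)
    (hd' : ∀ u, d' u ≤ d u + a u)
    (b : ι → ℕ) (hb01 : ∀ u, b u = 0 ∨ b u = 1)
    (hb0 : ∀ u, b u = 0 → d' u = 0)
    (M M' : ℕ)
    (hyp : ∑ u : ι, (b u : ℝ) * Real.exp (((d u : ℝ) + (a u : ℝ)) / 10)
          + 2 ^ i * (M' : ℝ) ≤
        ∑ u : ι, (1 - (a u : ℝ) / (10 * (k : ℝ))) ^ k *
            Real.exp (((d u : ℝ) + (a u : ℝ)) / 10)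
          + 2 ^ (i - 1) * (M : ℝ)) :
    ∑ u : ι, Real.exp ((d' u : ℝ) / 10) + 2 ^ i * (M' : ℝ) ≤
      ∑ u : ι, Real.exp ((d u : ℝ) / 10) + 2 ^ (i - 1) * (M : ℝ) + (n : ℝ) := by
  have hkpos : (0:ℝ) < (k:ℝ) := by exact_mod_cast hk
  have h1 : ∑ u : ι, Real.exp ((d' u : ℝ) / 10) ≤
      ∑ u : ι, ((b u : ℝ) * Real.exp (((d u : ℝ) + (a u : ℝ)) / 10) + 1) := by
    apply Finset.sum_le_sum
    intro u _
    rcases hb01 u with h0 | h1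
    · rw [h0, hb0 u h0]
      simp [Real.exp_nonneg]
    · rw [h1]; push_cast; rw [one_mul]
      have : Real.exp ((d' u : ℝ) / 10) ≤ Real.exp (((d u : ℝ) + (a u : ℝ)) / 10) := by
        apply Real.exp_le_exp.2
        have := hd' u
        have : (d' u : ℝ) ≤ (d u : ℝ) + (a u : ℝ) := by exact_mod_cast this
        linarith
      linarith
  rw [Finset.sum_add_distrib] at h1
  simp only [Finset.sum_const, Finset.card_univ, hn, nsmul_eq_mul, mul_one] at h1
  have h2 : ∑ u : ι, (1 - (a u : ℝ) / (10 * (k : ℝ))) ^ k *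
      Real.exp (((d u : ℝ) + (a u : ℝ)) / 10) ≤
      ∑ u : ι, Real.exp ((d u : ℝ) / 10) := by
    apply Finset.sum_le_sum
    intro u _
    have hx : (a u : ℝ) / (10 * (k : ℝ)) ≤ 1 := by
      rw [div_le_one (by linarith)]
      have : (a u : ℝ) ≤ (k : ℝ) := by exact_mod_cast ha u
      linarith
    have hpow : (1 - (a u : ℝ) / (10 * (k : ℝ))) ^ k ≤
        Real.exp (-((a u : ℝ) / (10 * (k : ℝ)))) ^ k := by
      apply pow_le_pow_left₀ (by linarith)
      linarith [Real.add_one_le_exp (-((a u : ℝ) / (10 * (k : ℝ))))]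
    calc (1 - (a u : ℝ) / (10 * (k : ℝ))) ^ k *
        Real.exp (((d u : ℝ) + (a u : ℝ)) / 10)
        ≤ Real.exp (-((a u : ℝ) / (10 * (k : ℝ)))) ^ k *
          Real.exp (((d u : ℝ) + (a u : ℝ)) / 10) := by
          exact mul_le_mul_of_nonneg_right hpow (Real.exp_nonneg _)
      _ = Real.exp ((d u : ℝ) / 10) := by
          rw [← Real.exp_nat_mul, ← Real.exp_add]
          congr 1
          field_simp
          ring
  linarith
end

section
/- (Good sets make the inner potential non-increasing.) Let k ≥ 1 and i ≥ 1 be integers, let j ∈ {1,…,k}, let M be a natural number, and let U be a finite index set. For each u ∈ U let A_u be a finite set with |A_u| ≤ k and e_u ≥ 0 a real number. Let W and S be finite sets and put W' = W ∪ S. For r ∈ {j−1, j} define p_r(u) = [indicator that A_u ∩ W_r = ∅]·(1 − |A_u|/(10k))^{k−r}, where W_{j−1} = W and W_j = W', define φ_r(u) = p_r(u)·e_u, and define φ_r = ∑_{u∈U} φ_r(u) + |W_r|·2^i + ((k−r)/k)·2^{i−1}·M. For each u set Y(u) = 1 − |A_u ∩ S| + |A_u ∩ S|·(|A_u ∩ S|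 − 1)/2. If ∑_{u∈U} Y(u)·φ_{j−1}(u)/(1 − |A_u|/(10k)) + |S|·2^i ≤ ∑_{u∈U} φ_{j−1}(u) + (2^{i−1}/k)·M, then φ_j ≤ φ_{j−1}. -/
/-- Good sets make the inner potential non-increasing (abstract form).
With `p_r(u) = 1[A_u ∩ W_r = ∅]·(1 − |A_u|/(10k))^{k−r}`, `φ_r(u) = p_r(u)·e_u`,
`φ_r = ∑_u φ_r(u) + |W_r|·2^i + ((k−r)/k)·2^{i−1}·M` (where `W_{j−1} = W`,
`W_j = W ∪ S`) and `Y(u) = 1 − |A_u ∩ S| + |A_u ∩ S|(|A_u ∩ S| − 1)/2`: if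
`∑_u Y(u)·φ_{j−1}(u)/(1 − |A_u|/(10k)) + |S|·2^i ≤ ∑_u φ_{j−1}(u) + (2^{i−1}/k)·M`,
then `φ_j ≤ φ_{j−1}`. -/
theorem stmt7 {ι α : Type*} [Fintype ι] [DecidableEq α]
    (k i j : ℕ) (hk : 1 ≤ k) (hi : 1 ≤ i) (hj1 : 1 ≤ j) (hjk : j ≤ k)
    (M : ℕ)
    (A : ι → Finset α) (hA : ∀ u, (A u).card ≤ k)
    (e : ι → ℝ) (he : ∀ u, 0 ≤ e u)
    (W S : Finset α)
    (hyp : ∑ u : ι,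
          (1 - ((A u ∩ S).card : ℝ)
              + ((A u ∩ S).card : ℝ) * (((A u ∩ S).card : ℝ) - 1) / 2) *
            ((if A u ∩ W = ∅ then
                (1 - ((A u).card : ℝ) / (10 * (k : ℝ))) ^ (k - (j - 1)) else 0) * e u) /
            (1 - ((A u).card : ℝ) / (10 * (k : ℝ)))
          + (S.card : ℝ) * 2 ^ i ≤
        ∑ u : ι, (if A u ∩ W = ∅ then
            (1 - ((A u).card : ℝ) / (10 * (k : ℝ))) ^ (k - (j - 1)) else 0) * e u
          + 2 ^ (i - 1) / (k : ℝ) * (M : ℝ)) :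
    ∑ u : ι, (if A u ∩ (W ∪ S) = ∅ then
          (1 - ((A u).card : ℝ) / (10 * (k : ℝ))) ^ (k - j) else 0) * e u
        + ((W ∪ S).card : ℝ) * 2 ^ i
        + ((k - j : ℕ) : ℝ) / (k : ℝ) * (2 ^ (i - 1) * (M : ℝ)) ≤
      ∑ u : ι, (if A u ∩ W = ∅ then
          (1 - ((A u).card : ℝ) / (10 * (k : ℝ))) ^ (k - (j - 1)) else 0) * e u
        + (W.card : ℝ) * 2 ^ i
        + ((k - (j - 1) : ℕ) : ℝ) / (k : ℝ) * (2 ^ (i - 1) * (M : ℝ)) := by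

  have hk' : (0:ℝ) < k := by exact_mod_cast hk
  have hq : ∀ u : ι, 0 < 1 - ((A u).card : ℝ) / (10 * (k : ℝ)) := by
    intro u
    have h1 : ((A u).card : ℝ) ≤ k := by exact_mod_cast hA u
    have h2 : ((A u).card : ℝ) / (10 * k) < 1 := by
      rw [div_lt_one (by positivity)]; linarith
    linarith
  have hexp : k - (j - 1) = (k - j) + 1 := by omega
  have key : ∀ u : ι, (if A u ∩ (W ∪ S) = ∅ then
          (1 - ((A u).card : ℝ) / (10 * (k : ℝ))) ^ (k - j) else 0) * e u ≤
      (1 - ((A u ∩ S).card : ℝ)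
          + ((A u ∩ S).card : ℝ) * (((A u ∩ S).card : ℝ) - 1) / 2) *
        ((if A u ∩ W = ∅ then
            (1 - ((A u).card : ℝ) / (10 * (k : ℝ))) ^ (k - (j - 1)) else 0) * e u) /
        (1 - ((A u).card : ℝ) / (10 * (k : ℝ))) := by
    intro u
    set q := 1 - ((A u).card : ℝ) / (10 * (k : ℝ)) with hqdef
    have hqu := hq u
    rw [Finset.inter_union_distrib_left]
    by_cases hW : A u ∩ W = ∅
    · rw [if_pos hW, hW, Finset.empty_union, hexp, pow_succ]
      by_cases hS : A u ∩ S = ∅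
      · rw [if_pos hS, hS]
        simp only [Finset.card_empty, Nat.cast_zero]
        rw [mul_comm (q ^ (k - j)) q, mul_assoc, mul_div_assoc]
        rw [mul_div_cancel_left₀ _ (ne_of_gt hqu)]
        norm_num
      · rw [if_neg hS]
        have hs1 : 1 ≤ (A u ∩ S).card :=
          Finset.card_pos.2 (Finset.nonempty_iff_ne_empty.2 hS)
        have hY : 0 ≤ 1 - ((A u ∩ S).card : ℝ)
            + ((A u ∩ S).card : ℝ) * (((A u ∩ S).card : ℝ) - 1) / 2 := by
          rcases Nat.lt_or_ge (A u ∩ S).card 2 with h | h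
          · have : (A u ∩ S).card = 1 := by omega
            rw [this]; norm_num
          · have h2 : (2:ℝ) ≤ ((A u ∩ S).card : ℝ) := by exact_mod_cast h
            nlinarith
        rw [zero_mul]
        exact div_nonneg (mul_nonneg hY
          (mul_nonneg (mul_nonneg (pow_nonneg hqu.le _) hqu.le) (he u))) hqu.le
    · rw [if_neg hW]
      have hne : A u ∩ W ∪ A u ∩ S ≠ ∅ := by
        intro h
        exact hW (Finset.union_eq_empty.1 h).1
      rw [if_neg hne]
      simp [hqu.ne']
  have hcard : ((W ∪ S).card : ℝ) ≤ (W.card : ℝ) + (S.card : ℝ) := by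
    exact_mod_cast Finset.card_union_le W S
  have hcast : ((k - (j - 1) : ℕ) : ℝ) = ((k - j : ℕ) : ℝ) + 1 := by
    rw [hexp]; push_cast; ring
  have hM : (0:ℝ) ≤ 2 ^ (i-1) * (M:ℝ) := by positivity
  have h2i : (0:ℝ) < 2 ^ i := by positivity
  rw [hcast]
  have hk0 : (k:ℝ) ≠ 0 := ne_of_gt hk'
  have expand : (((k - j : ℕ) : ℝ) + 1) / (k:ℝ) * (2 ^ (i-1) * (M:ℝ)) =
      ((k - j : ℕ) : ℝ) / (k:ℝ) * (2 ^ (i-1) * (M:ℝ)) + 2 ^ (i-1) / (k:ℝ) * (M:ℝ) := by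
    field_simp
  rw [expand]
  have hsum' : ∑ u : ι, (if A u ∩ (W ∪ S) = ∅ then
          (1 - ((A u).card : ℝ) / (10 * (k : ℝ))) ^ (k - j) else 0) * e u ≤
      ∑ u : ι, (1 - ((A u ∩ S).card : ℝ)
          + ((A u ∩ S).card : ℝ) * (((A u ∩ S).card : ℝ) - 1) / 2) *
        ((if A u ∩ W = ∅ then
            (1 - ((A u).card : ℝ) / (10 * (k : ℝ))) ^ (k - (j - 1)) else 0) * e u) /
        (1 - ((A u).card : ℝ) / (10 * (k : ℝ))) :=
    Finset.sum_le_sum (fun u _ => key u)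
  nlinarith [mul_le_mul_of_nonneg_right hcard (le_of_lt h2i)]
end

section
/- (First iteration of iterative sampling.) Consider a hitting-set instance with sets S_1,…,S_N ⊆ {1,…,n}, real weights w_i ≥ 0 not all zero, and p ∈ (0, 1/2], with n ≥ 1. Let Δ = max_i |S_i| ≥ 1, T = ⌈8pΔ⌉, q = 4p/T, and τ = ∑_{i=1}^N w_i·e^{−|S_i|·p}. Let X_1,…,X_n : Ω → {0,1} be pairwise independent random variables on a probability space with P(X_j = 1) = q, and for each i set Y_i = ∑_{j∈S_i} X_j − ∑_{j<k, j,k∈S_i} X_j·X_k. Then E[ (∑_{i=1}^N (1 − Y_i)·w_i·e^{−|S_i|(T−1)p/T})/τ + (∑_{j=1}^n X_j + 4n(T−1)p/T)/(4np) ] ≤ 2. -/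
/-!
Each `X_j` has mean `q` and, by pairwise independence, each product `X_j X_l` with `j ≠ l` has
mean `q²`. Hence `E[1 - Y_i] ≤ 1 - x + x²` for `x = |S_i| q`, and `x ≤ Δ q ≤ 1/2` by the choice
of `T`. On `[0, 1/2]` we have `1 - x + x² ≤ e^{-x/4}`, and since `q/4 = p/T` this factor turns
`e^{-|S_i|(T-1)p/T}` into `e^{-|S_i|p}`; so the first numerator has expectation at most `τ`. The
second numerator has expectation `nq + 4n(T-1)p/T = 4np`. Each summand thus has expectation at
most `1`.
-/

open MeasureTheory ProbabilityTheory Finset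

lemma eq_indicator_one_of_forall_eq_zero_or_one {α : Type*} {f : α → ℝ}
    (h01 : ∀ a, f a = 0 ∨ f a = 1) : f = {a | f a = 1}.indicator 1 := by
  funext a
  rcases h01 a with h | h <;> simp [h]

section ZeroOneValued

variable {Ω : Type*} [MeasurableSpace Ω] {μ : Measure Ω} {f : Ω → ℝ}

lemma integrable_of_forall_eq_zero_or_one [IsFiniteMeasure μ] (hf : Measurable f)
    (h01 : ∀ ω, f ω = 0 ∨ f ω = 1) : Integrable f μ := by
  rw [eq_indicator_one_of_forall_eq_zero_or_one h01]
  exact (integrable_const 1).indicator (hf (measurableSet_singleton 1))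

lemma integral_eq_measureReal_of_forall_eq_zero_or_one (hf : Measurable f)
    (h01 : ∀ ω, f ω = 0 ∨ f ω = 1) : ∫ ω, f ω ∂μ = μ.real {ω | f ω = 1} := by
  conv_lhs => rw [eq_indicator_one_of_forall_eq_zero_or_one h01]
  exact integral_indicator_one (hf (measurableSet_singleton 1))

end ZeroOneValued

section PairwiseIndependent

variable {Ω ι : Type*} [MeasurableSpace Ω] {μ : Measure Ω}
  [LinearOrder ι] {X : ι → Ω → ℝ} {q : ℝ}

lemma integrable_sum_sub_sum_mul_of_indepFun (s : Finset ι) (hint : ∀ j, Integrable (X j) μ)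
    (hindep : ∀ j k, j ≠ k → IndepFun (X j) (X k) μ) :
    Integrable (fun ω ↦ ∑ j ∈ s, X j ω - ∑ j ∈ s, ∑ l ∈ s with j < l, X j ω * X l ω) μ :=
  (integrable_finsetSum _ fun j _ ↦ hint j).sub <| integrable_finsetSum _ fun j _ ↦
    integrable_finsetSum _ fun l hl ↦
      (hindep j l (mem_filter.1 hl).2.ne).integrable_mul (hint j) (hint l)

lemma integral_sum_sub_sum_mul_of_indepFun (s : Finset ι) (hint : ∀ j, Integrable (X j) μ)
    (hmean : ∀ j, ∫ ω, X j ω ∂μ = q) (hindep : ∀ j k, j ≠ k → IndepFun (X j) (X k) μ) :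
    ∫ ω, (∑ j ∈ s, X j ω - ∑ j ∈ s, ∑ l ∈ s with j < l, X j ω * X l ω) ∂μ =
      #s * q - (∑ j ∈ s, (#{l ∈ s | j < l} : ℝ)) * q ^ 2 := by
  have hpair : ∀ j l, j ≠ l → Integrable (fun ω ↦ X j ω * X l ω) μ ∧
      ∫ ω, X j ω * X l ω ∂μ = q ^ 2 := fun j l hjl ↦
    ⟨(hindep j l hjl).integrable_mul (hint j) (hint l), by
      rw [(hindep j l hjl).integral_fun_mul_eq_mul_integral (hint j).1 (hint l).1, hmean, hmean,
        sq]⟩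
  rw [integral_sub (integrable_finsetSum _ fun j _ ↦ hint j)
      (integrable_finsetSum _ fun j _ ↦ integrable_finsetSum _ fun l hl ↦
        (hpair j l (mem_filter.1 hl).2.ne).1),
    integral_finsetSum _ fun j _ ↦ hint j,
    integral_finsetSum _ fun j _ ↦ integrable_finsetSum _ fun l hl ↦
        (hpair j l (mem_filter.1 hl).2.ne).1]
  simp only [hmean, sum_const, nsmul_eq_mul, sum_mul]
  congr 1
  refine sum_congr rfl fun j _ ↦ ?_
  rw [integral_finsetSum _ fun l hl ↦ (hpair j l (mem_filter.1 hl).2.ne).1,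
    sum_congr rfl fun l hl ↦ (hpair j l (mem_filter.1 hl).2.ne).2, sum_const, nsmul_eq_mul]

end PairwiseIndependent

lemma one_sub_add_sq_le_exp_neg_div_four {x : ℝ} (hx0 : 0 ≤ x) (hx : x ≤ 1 / 2) :
    1 - x + x ^ 2 ≤ Real.exp (-(x / 4)) := by
  nlinarith [Real.add_one_le_exp (-(x / 4))]

lemma one_sub_sub_mul_exp_le {c m p : ℝ} {T : ℕ} (hT0 : 0 < T) (hp : 0 < p)
    (hc : 0 ≤ c) (hcT : 8 * p * c ≤ T) (hm : m ≤ c ^ 2) :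
    (1 - (c * (4 * p / T) - m * (4 * p / T) ^ 2)) *
      Real.exp (-c * ((T - 1 : ℕ) : ℝ) * p / T) ≤ Real.exp (-c * p) := by
  set x := c * (4 * p / T) with hx
  have hTR : (0 : ℝ) < T := Nat.cast_pos.2 hT0
  have hx0 : 0 ≤ x := by positivity
  have hx_half : x ≤ 1 / 2 := by
    rw [hx, mul_div_assoc', div_le_iff₀ hTR]
    linarith
  have hmq : m * (4 * p / T) ^ 2 ≤ x ^ 2 := by
    rw [hx, mul_pow]
    exact mul_le_mul_of_nonneg_right hm (sq_nonneg _)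
  calc (1 - (x - m * (4 * p / T) ^ 2)) * Real.exp (-c * ((T - 1 : ℕ) : ℝ) * p / T)
      ≤ Real.exp (-(x / 4)) * Real.exp (-c * ((T - 1 : ℕ) : ℝ) * p / T) := by
        gcongr
        linarith [one_sub_add_sq_le_exp_neg_div_four hx0 hx_half]
    _ = Real.exp (-c * p) := by
        rw [← Real.exp_add, Nat.cast_pred hT0, hx]
        congr 1
        field_simp
        ring

section Expectation

variable {Ω ι : Type*} [MeasurableSpace Ω] {μ : Measure Ω}

lemma integral_sum_div_sum_le_one {κ : Type*} (t : Finset κ) {Z : κ → Ω → ℝ} {a : κ → ℝ}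
    (hint : ∀ i, Integrable (Z i) μ) (hle : ∀ i, ∫ ω, Z i ω ∂μ ≤ a i) (ha : ∀ i, 0 ≤ a i) :
    ∫ ω, (∑ i ∈ t, Z i ω) / ∑ i ∈ t, a i ∂μ ≤ 1 := by
  rw [integral_div, integral_finsetSum _ fun i _ ↦ hint i]
  exact div_le_one_of_le₀ (sum_le_sum fun i _ ↦ hle i) (sum_nonneg fun i _ ↦ ha i)

variable [IsProbabilityMeasure μ]

lemma integral_one_sub_sum_sub_sum_mul_mul_exp_le [LinearOrder ι] {X : ι → Ω → ℝ}
    (s : Finset ι) {p : ℝ} {T : ℕ} (hT0 : 0 < T) (hp : 0 < p) (hsT : 8 * p * #s ≤ T)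
    (hint : ∀ j, Integrable (X j) μ) (hmean : ∀ j, ∫ ω, X j ω ∂μ = 4 * p / T)
    (hindep : ∀ j k, j ≠ k → IndepFun (X j) (X k) μ) :
    ∫ ω, (1 - (∑ j ∈ s, X j ω - ∑ j ∈ s, ∑ l ∈ s with j < l, X j ω * X l ω)) *
      Real.exp (-(#s : ℝ) * ((T - 1 : ℕ) : ℝ) * p / T) ∂μ ≤ Real.exp (-(#s : ℝ) * p) := by
  have hpairs : ∑ j ∈ s, (#{l ∈ s | j < l} : ℝ) ≤ (#s : ℝ) ^ 2 := by
    rw [sq, ← nsmul_eq_mul, ← sum_const]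
    exact sum_le_sum fun j _ ↦ by exact_mod_cast card_filter_le _ _
  rw [integral_mul_const, integral_sub (integrable_const 1)
    (integrable_sum_sub_sum_mul_of_indepFun s hint hindep), integral_const, probReal_univ,
    one_smul, integral_sum_sub_sum_mul_of_indepFun s hint hmean hindep]
  exact one_sub_sub_mul_exp_le hT0 hp (by positivity) hsT hpairs

lemma integral_sum_add_const_div {n : ℕ} {X : Fin n → Ω → ℝ} {q : ℝ}
    (hint : ∀ j, Integrable (X j) μ) (hmean : ∀ j, ∫ ω, X j ω ∂μ = q) (c d : ℝ) :
    ∫ ω, ((∑ j, X j ω) + c) / d ∂μ = (n * q + c) / d := by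
  rw [integral_div, integral_add (integrable_finsetSum _ fun j _ ↦ hint j) (integrable_const c),
    integral_finsetSum _ fun j _ ↦ hint j, integral_const, probReal_univ, one_smul]
  simp only [hmean, sum_const, card_univ, Fintype.card_fin, nsmul_eq_mul]

end Expectation

theorem stmt11_general {Ω : Type*} [MeasurableSpace Ω] (P : Measure Ω) [IsProbabilityMeasure P]
    (n N : ℕ)
    (S : Fin N → Finset (Fin n)) (w : Fin N → ℝ)
    (hw : ∀ i, 0 ≤ w i)
    (p : ℝ) (hp0 : 0 < p)
    (Δ : ℕ) (hΔ : Δ = Finset.univ.sup (fun i => (S i).card)) (hΔ1 : 1 ≤ Δ)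
    (T : ℕ) (hT : T = ⌈8 * p * (Δ : ℝ)⌉₊)
    (q : ℝ) (hq : q = 4 * p / (T : ℝ))
    (τ : ℝ) (hτ : τ = ∑ i, w i * Real.exp (-((S i).card : ℝ) * p))
    (X : Fin n → Ω → ℝ)
    (hmeas : ∀ j, Measurable (X j))
    (h01 : ∀ j ω, X j ω = 0 ∨ X j ω = 1)
    (hprob : ∀ j, P {ω | X j ω = 1} = ENNReal.ofReal q)
    (hindep : ∀ j k : Fin n, j ≠ k → IndepFun (X j) (X k) P)
    (Y : Fin N → Ω → ℝ)
    (hY : ∀ i ω, Y i ω = ∑ j ∈ S i, X j ω -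
        ∑ j ∈ S i, ∑ l ∈ (S i).filter (fun l => j < l), X j ω * X l ω) :
    ∫ ω, ((∑ i, (1 - Y i ω) * w i *
          Real.exp (-((S i).card : ℝ) * ((T - 1 : ℕ) : ℝ) * p / (T : ℝ))) / τ +
        ((∑ j, X j ω) + 4 * (n : ℝ) * ((T - 1 : ℕ) : ℝ) * p / (T : ℝ)) /
          (4 * (n : ℝ) * p)) ∂P ≤ 2 := by
  have hT0 : 0 < T := hT ▸ Nat.ceil_pos.2 (by positivity)
  have hXint j : Integrable (X j) P := integrable_of_forall_eq_zero_or_one (hmeas j) (h01 j)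
  have hXmean j : ∫ ω, X j ω ∂P = q := by
    rw [integral_eq_measureReal_of_forall_eq_zero_or_one (hmeas j) (h01 j), measureReal_def,
      hprob, ENNReal.toReal_ofReal (hq ▸ by positivity)]
  have hsT i : 8 * p * (S i).card ≤ T := calc
    8 * p * (S i).card ≤ 8 * p * Δ := by
      gcongr
      exact_mod_cast hΔ ▸ le_sup (f := fun i ↦ (S i).card) (mem_univ i)
    _ ≤ T := hT ▸ Nat.le_ceil _
  have hsummand_int i : Integrable (fun ω ↦ (1 - Y i ω) * w i *
      Real.exp (-((S i).card : ℝ) * ((T - 1 : ℕ) : ℝ) * p / T)) P := by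
    simp_rw [hY i]
    exact (((integrable_const 1).sub
      (integrable_sum_sub_sum_mul_of_indepFun _ hXint hindep)).mul_const _).mul_const _
  have hterm i : ∫ ω, (1 - Y i ω) * w i *
      Real.exp (-((S i).card : ℝ) * ((T - 1 : ℕ) : ℝ) * p / T) ∂P ≤
        w i * Real.exp (-((S i).card : ℝ) * p) := by
    simp_rw [hY i, mul_right_comm _ (w i)]
    rw [integral_mul_const, mul_comm]
    exact mul_le_mul_of_nonneg_left (integral_one_sub_sum_sub_sum_mul_mul_exp_le _ hT0 hp0
      (hsT i) hXint (hq ▸ hXmean) hindep) (hw i)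
  have hfirst := hτ ▸ integral_sum_div_sum_le_one univ hsummand_int hterm
    fun i ↦ mul_nonneg (hw i) (Real.exp_pos _).le
  have hsecond : ∫ ω, ((∑ j, X j ω) + 4 * (n : ℝ) * ((T - 1 : ℕ) : ℝ) * p / (T : ℝ)) /
      (4 * (n : ℝ) * p) ∂P ≤ 1 := by
    have hmass : n * q + 4 * n * ((T - 1 : ℕ) : ℝ) * p / T = 4 * n * p := by
      rw [hq, Nat.cast_pred hT0]
      field_simp
      ring
    rw [integral_sum_add_const_div hXint hXmean, hmass]
    exact div_self_le_one _
  calc _ = _ := integral_add ((integrable_finsetSum _ fun i _ ↦ hsummand_int i).div_const τ)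
        (((integrable_finsetSum _ fun j _ ↦ hXint j).add (integrable_const _)).div_const _)
    _ ≤ 1 + 1 := add_le_add hfirst hsecond
    _ = 2 := one_add_one_eq_two

/-- First iteration of iterative sampling for the hitting set problem:
with `Δ = max_i |S_i|`, `T = ⌈8pΔ⌉`, `q = 4p/T`, `τ = ∑_i w_i e^{−|S_i|p}` and
pairwise independent `{0,1}`-valued `X_1,…,X_n` with `P(X_j = 1) = q`, setting
`Y_i = ∑_{j∈S_i} X_j − ∑_{j<k ∈ S_i} X_j X_k`, one has
`E[(∑_i (1−Y_i) w_i e^{−|S_i|(T−1)p/T})/τ + (∑_j X_j + 4n(T−1)p/T)/(4np)] ≤ 2`. -/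
theorem stmt11 {Ω : Type*} [MeasurableSpace Ω] (P : Measure Ω) [IsProbabilityMeasure P]
    (n N : ℕ) (hn : 1 ≤ n)
    (S : Fin N → Finset (Fin n)) (w : Fin N → ℝ)
    (hw : ∀ i, 0 ≤ w i) (hw0 : ∃ i, w i ≠ 0)
    (p : ℝ) (hp0 : 0 < p) (hp : p ≤ 1 / 2)
    (Δ : ℕ) (hΔ : Δ = Finset.univ.sup (fun i => (S i).card)) (hΔ1 : 1 ≤ Δ)
    (T : ℕ) (hT : T = ⌈8 * p * (Δ : ℝ)⌉₊)
    (q : ℝ) (hq : q = 4 * p / (T : ℝ))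
    (τ : ℝ) (hτ : τ = ∑ i, w i * Real.exp (-((S i).card : ℝ) * p))
    (X : Fin n → Ω → ℝ)
    (hmeas : ∀ j, Measurable (X j))
    (h01 : ∀ j ω, X j ω = 0 ∨ X j ω = 1)
    (hprob : ∀ j, P {ω | X j ω = 1} = ENNReal.ofReal q)
    (hindep : ∀ j k : Fin n, j ≠ k → IndepFun (X j) (X k) P)
    (Y : Fin N → Ω → ℝ)
    (hY : ∀ i ω, Y i ω = ∑ j ∈ S i, X j ω -
        ∑ j ∈ S i, ∑ l ∈ (S i).filter (fun l => j < l), X j ω * X l ω) :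
    ∫ ω, ((∑ i, (1 - Y i ω) * w i *
          Real.exp (-((S i).card : ℝ) * ((T - 1 : ℕ) : ℝ) * p / (T : ℝ))) / τ +
        ((∑ j, X j ω) + 4 * (n : ℝ) * ((T - 1 : ℕ) : ℝ) * p / (T : ℝ)) /
          (4 * (n : ℝ) * p)) ∂P ≤ 2 :=
  stmt11_general P n N S w hw p hp0 Δ hΔ hΔ1 T hT q hq τ hτ X hmeas h01 hprob hindep Y hY
end

section
/- (Guarantee of derandomized iterative sampling.) Consider a hitting-set instance with sets S_1,…,S_N ⊆ {1,…,n}, weights w_i ≥ 0 not all zero, p ∈ (0, 1/2], Δ = max_i |S_i| ≥ 1, T = ⌈8pΔ⌉, q = 4p/T, τ = ∑_i w_i·e^{−|S_i|p}. For t = 1,…,T let G^t be the random subset given by pairwise independent {0,1}-valued indicators with success probability q, and suppose H^1,…,H^T ⊆ {1,…,n} are (deterministic) subsets satisfying f^t(H^t) ≤ E[f^t(G^t)] for every t, where f^t is defined from H^1,…,H^{t−1} by f^t(G) = (∑_{i : S_i ∩ (H^1∪⋯∪H^{t−1}) = ∅} (1 − Y_i(G))·w_i·e^{−|S_i|(T−t)p/T})/τ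 + (|G| + ∑_{j=1}^{t−1}|H^j| + 4n(T−t)p/T)/(4np), with Y_i(G) = ∑_{j∈S_i} 1[j∈G] − ∑_{j<k, j,k∈S_i} 1[j∈G]·1[k∈G]. Then, setting H = H^1 ∪ ⋯ ∪ H^T, one has f^T(H^T) ≥ (∑_{i : H ∩ S_i = ∅} w_i)/τ + |H|/(4np), and consequently ∑_{i : H ∩ S_i = ∅} w_i ≤ 2τ and |H| ≤ 8np. -/
open MeasureTheory ProbabilityTheory

open Classical in
/-- The value `f^t(G)` of the paper, written in terms of the indicator values
`X j = 1[j ∈ G]` of the set `G` (so `|G| = ∑_j X j` and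
`Y_i(G) = ∑_{j∈S_i} X_j − ∑_{j<l ∈ S_i} X_j X_l`). -/
noncomputable def fGen {n N : ℕ} (S : Fin N → Finset (Fin n)) (w : Fin N → ℝ)
    (p τ : ℝ) (T t : ℕ) (H : ℕ → Finset (Fin n)) (X : Fin n → ℝ) : ℝ :=
  (∑ i ∈ Finset.univ.filter (fun i => ∀ j ∈ Finset.Icc 1 (t - 1), S i ∩ H j = ∅),
      (1 - (∑ j ∈ S i, X j - ∑ j ∈ S i, ∑ l ∈ (S i).filter (fun l => j < l), X j * X l)) *
        w i * Real.exp (-((S i).card : ℝ) * ((T - t : ℕ) : ℝ) * p / (T : ℝ))) / τ +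
    ((∑ j, X j) + (∑ j ∈ Finset.Icc 1 (t - 1), ((H j).card : ℝ)) +
        4 * (n : ℝ) * ((T - t : ℕ) : ℝ) * p / (T : ℝ)) / (4 * (n : ℝ) * p)

/-- The indicator function of a finite set `G ⊆ {1,…,n}`. -/
noncomputable def indic {n : ℕ} (G : Finset (Fin n)) : Fin n → ℝ :=
  fun j => if j ∈ G then 1 else 0

lemma integral_eq_of_01 {Ω : Type*} [MeasurableSpace Ω] (P : Measure Ω) [IsProbabilityMeasure P]
    (g : Ω → ℝ) (hg : Measurable g) (h01 : ∀ ω, g ω = 0 ∨ g ω = 1) :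
    Integrable g P ∧ ∫ ω, g ω ∂P = (P {ω | g ω = 1}).toReal := by
  have hs : MeasurableSet {ω | g ω = 1} := hg (measurableSet_singleton 1)
  have hrepr : g = Set.indicator {ω | g ω = 1} (fun _ => (1:ℝ)) := by
    funext ω
    rcases h01 ω with h | h <;> simp [Set.indicator, h]
  constructor
  · rw [hrepr]
    exact (integrable_indicator_iff hs).2 (integrableOn_const (measure_lt_top P _).ne)
  · conv_lhs => rw [hrepr]
    exact integral_indicator_one hs

lemma sq_sum_split {α : Type*} [LinearOrder α] (s : Finset α) (x : α → ℝ) :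
    (∑ j ∈ s, x j)^2 = (∑ j ∈ s, x j * x j)
      + 2 * ∑ j ∈ s, ∑ l ∈ s.filter (fun l => j < l), x j * x l := by
  classical
  have h1 : (∑ j ∈ s, x j)^2 = ∑ j ∈ s, ∑ l ∈ s, x j * x l := by
    rw [sq, Finset.sum_mul_sum]
  have h2 : ∀ j ∈ s, ∑ l ∈ s, x j * x l
      = x j * x j + (∑ l ∈ s.filter (fun l => l < j), x j * x l
        + ∑ l ∈ s.filter (fun l => j < l), x j * x l) := by
    intro j hj
    have hsplit : s = insert j ((s.filter (fun l => l < j)) ∪ (s.filter (fun l => j < l))) := by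
      ext l
      simp only [Finset.mem_insert, Finset.mem_union, Finset.mem_filter]
      constructor
      · intro hl
        rcases lt_trichotomy l j with h|h|h
        · exact Or.inr (Or.inl ⟨hl, h⟩)
        · exact Or.inl h
        · exact Or.inr (Or.inr ⟨hl, h⟩)
      · rintro (rfl | ⟨h,_⟩ | ⟨h,_⟩)
        · exact hj
        · exact h
        · exact h
    have hdisj : Disjoint (s.filter (fun l => l < j)) (s.filter (fun l => j < l)) := by
      simp only [Finset.disjoint_left, Finset.mem_filter]
      rintro a ⟨_, h1⟩ ⟨_, h2⟩
      exact absurd (h1.trans h2) (lt_irrefl a)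
    have hj' : j ∉ (s.filter (fun l => l < j)) ∪ (s.filter (fun l => j < l)) := by
      simp
    calc ∑ l ∈ s, x j * x l
        = ∑ l ∈ insert j ((s.filter (fun l => l < j)) ∪ (s.filter (fun l => j < l))),
            x j * x l := by rw [← hsplit]
      _ = x j * x j + (∑ l ∈ s.filter (fun l => l < j), x j * x l
            + ∑ l ∈ s.filter (fun l => j < l), x j * x l) := by
          rw [Finset.sum_insert hj', Finset.sum_union hdisj]
  have h3 : ∑ j ∈ s, ∑ l ∈ s.filter (fun l => l < j), x j * x l
      = ∑ j ∈ s, ∑ l ∈ s.filter (fun l => j < l), x j * x l := by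
    rw [Finset.sum_comm' (t' := s) (s' := fun l => s.filter (fun j => l < j))
      (by intro a b; simp only [Finset.mem_filter]; tauto)]
    refine Finset.sum_congr rfl (fun j hj => Finset.sum_congr rfl (fun l hl => ?_))
    ring
  rw [h1, Finset.sum_congr rfl h2, Finset.sum_add_distrib, Finset.sum_add_distrib, h3]
  ring

lemma Y_bound {n : ℕ} (s : Finset (Fin n)) (x : Fin n → ℝ) (h01 : ∀ j, x j = 0 ∨ x j = 1) :
    0 ≤ 1 - (∑ j ∈ s, x j - ∑ j ∈ s, ∑ l ∈ s.filter (fun l => j < l), x j * x l) := by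
  classical
  obtain ⟨k, hk⟩ : ∃ k : ℕ, ∑ j ∈ s, x j = k := by
    refine ⟨(s.filter (fun j => x j = 1)).card, ?_⟩
    rw [← Finset.sum_boole]
    refine Finset.sum_congr rfl (fun j _ => ?_)
    rcases h01 j with h|h <;> simp [h]
  have hsq : ∑ j ∈ s, x j * x j = ∑ j ∈ s, x j :=
    Finset.sum_congr rfl (fun j _ => by rcases h01 j with h|h <;> simp [h])
  have hid := sq_sum_split s x
  rw [hsq, hk] at hid
  rw [hk]
  rcases Nat.lt_or_ge k 2 with h|h
  · interval_cases k <;> (push_cast at hid ⊢; nlinarith [hid])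
  · have h2 : (2:ℝ) ≤ k := by exact_mod_cast h
    nlinarith [hid]

lemma Y_zero {n : ℕ} (s : Finset (Fin n)) (x : Fin n → ℝ) (h : ∀ j ∈ s, x j = 0) :
    (∑ j ∈ s, x j - ∑ j ∈ s, ∑ l ∈ s.filter (fun l => j < l), x j * x l) = 0 := by
  have h1 : ∑ j ∈ s, x j = 0 := Finset.sum_eq_zero h
  have h2 : ∑ j ∈ s, ∑ l ∈ s.filter (fun l => j < l), x j * x l = 0 :=
    Finset.sum_eq_zero (fun j hj => Finset.sum_eq_zero (fun l _ => by rw [h j hj, zero_mul]))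
  rw [h1, h2, sub_zero]

lemma key_ineq (m K : ℕ) (q : ℝ) (hq0 : 0 ≤ q) (hK : K ≤ m*m) (hmq : (m:ℝ) * q ≤ 1/2) :
    1 - ((m:ℝ) * q - (K:ℝ) * (q*q)) ≤ Real.exp (-((m:ℝ) * q / 4)) := by
  have h1 : (-((m:ℝ)*q/4)) + 1 ≤ Real.exp (-((m:ℝ)*q/4)) := Real.add_one_le_exp _
  have hm0 : (0:ℝ) ≤ m := Nat.cast_nonneg m
  have hKR : (K:ℝ) ≤ (m:ℝ)*(m:ℝ) := by exact_mod_cast hK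
  have hq2 : (0:ℝ) ≤ q*q := mul_nonneg hq0 hq0
  have h3 : (K:ℝ)*(q*q) ≤ ((m:ℝ)*(m:ℝ))*(q*q) := mul_le_mul_of_nonneg_right hKR hq2
  have h4 : ((m:ℝ)*q)*((m:ℝ)*q) ≤ ((m:ℝ)*q)*(1/2) :=
    mul_le_mul_of_nonneg_left hmq (mul_nonneg hm0 hq0)
  nlinarith [mul_nonneg hm0 hq0]

lemma indic01 {n : ℕ} (G : Finset (Fin n)) (j : Fin n) : indic G j = 0 ∨ indic G j = 1 := by
  by_cases h : j ∈ G <;> simp [indic, h]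

set_option maxHeartbeats 2000000 in
/-- Guarantee of derandomized iterative sampling: if for every `t ∈ {1,…,T}` the
deterministic set `H^t` satisfies `f^t(H^t) ≤ E[f^t(G^t)]` (with `G^t` sampled by
pairwise independent indicators of bias `q = 4p/T`), then with `H = H^1 ∪ ⋯ ∪ H^T`
one has `f^T(H^T) ≥ (∑_{i : H ∩ S_i = ∅} w_i)/τ + |H|/(4np)`; consequently
`∑_{i : H ∩ S_i = ∅} w_i ≤ 2τ` and `|H| ≤ 8np`. -/
theorem stmt13 {Ω : Type*} [MeasurableSpace Ω] (P : Measure Ω) [IsProbabilityMeasure P]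
    (n N : ℕ) (hn : 1 ≤ n)
    (S : Fin N → Finset (Fin n)) (w : Fin N → ℝ)
    (hw : ∀ i, 0 ≤ w i) (hw0 : ∃ i, w i ≠ 0)
    (p : ℝ) (hp0 : 0 < p) (hp : p ≤ 1 / 2)
    (Δ : ℕ) (hΔ : Δ = Finset.univ.sup (fun i => (S i).card)) (hΔ1 : 1 ≤ Δ)
    (T : ℕ) (hT : T = ⌈8 * p * (Δ : ℝ)⌉₊)
    (q : ℝ) (hq : q = 4 * p / (T : ℝ))
    (τ : ℝ) (hτ : τ = ∑ i, w i * Real.exp (-((S i).card : ℝ) * p))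
    (X : ℕ → Fin n → Ω → ℝ)
    (hmeas : ∀ t ∈ Finset.Icc 1 T, ∀ j, Measurable (X t j))
    (h01 : ∀ t ∈ Finset.Icc 1 T, ∀ j ω, X t j ω = 0 ∨ X t j ω = 1)
    (hprob : ∀ t ∈ Finset.Icc 1 T, ∀ j, P {ω | X t j ω = 1} = ENNReal.ofReal q)
    (hindep : ∀ t ∈ Finset.Icc 1 T, ∀ j k : Fin n, j ≠ k → IndepFun (X t j) (X t k) P)
    (H : ℕ → Finset (Fin n))
    (hgood : ∀ t ∈ Finset.Icc 1 T,
      fGen S w p τ T t H (indic (H t)) ≤ ∫ ω, fGen S w p τ T t H (fun j => X t j ω) ∂P) :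
    ((∑ i ∈ Finset.univ.filter
          (fun i => ((Finset.Icc 1 T).biUnion H) ∩ S i = ∅), w i) / τ +
        ((((Finset.Icc 1 T).biUnion H).card : ℝ)) / (4 * (n : ℝ) * p) ≤
          fGen S w p τ T T H (indic (H T))) ∧
      (∑ i ∈ Finset.univ.filter
          (fun i => ((Finset.Icc 1 T).biUnion H) ∩ S i = ∅), w i) ≤ 2 * τ ∧
      ((((Finset.Icc 1 T).biUnion H).card : ℝ)) ≤ 8 * (n : ℝ) * p := by
  classical
  -- basic positivity facts
  have hτpos : 0 < τ := by
    rw [hτ]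
    obtain ⟨i0, hi0⟩ := hw0
    refine Finset.sum_pos' (fun i _ => mul_nonneg (hw i) (Real.exp_pos _).le)
      ⟨i0, Finset.mem_univ i0, mul_pos ((hw i0).lt_of_ne (Ne.symm hi0)) (Real.exp_pos _)⟩
  have hΔR : (0:ℝ) < (Δ:ℝ) := by exact_mod_cast hΔ1
  have h8 : (0:ℝ) < 8 * p * (Δ:ℝ) := by nlinarith
  have hT1 : 1 ≤ T := by rw [hT]; exact Nat.ceil_pos.2 h8
  have hTR : (0:ℝ) < (T:ℝ) := by exact_mod_cast hT1
  have hTne : (T:ℝ) ≠ 0 := hTR.ne'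
  have hq0 : 0 < q := by rw [hq]; exact div_pos (by linarith) hTR
  have hnR : (0:ℝ) < (n:ℝ) := by exact_mod_cast hn
  have hDpos : (0:ℝ) < 4 * (n:ℝ) * p := mul_pos (mul_pos (by norm_num) hnR) hp0
  have hTceil : 8 * p * (Δ:ℝ) ≤ (T:ℝ) := by rw [hT]; exact Nat.le_ceil _
  have hΔq : (Δ:ℝ) * q ≤ 1/2 := by
    rw [hq, show (Δ:ℝ) * (4*p/(T:ℝ)) = (4*p*(Δ:ℝ))/(T:ℝ) from by ring, div_le_iff₀ hTR]
    linarith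
  have hmq : ∀ i : Fin N, ((S i).card : ℝ) * q ≤ 1/2 := by
    intro i
    have h1 : (S i).card ≤ Δ := hΔ ▸ Finset.le_sup (f := fun i => (S i).card) (Finset.mem_univ i)
    have h2 : ((S i).card : ℝ) ≤ (Δ:ℝ) := by exact_mod_cast h1
    calc ((S i).card : ℝ) * q ≤ (Δ:ℝ) * q := mul_le_mul_of_nonneg_right h2 hq0.le
      _ ≤ 1/2 := hΔq
  have hqsum : (∑ _j : Fin n, q) = (n:ℝ) * q := by
    rw [Finset.sum_const, Finset.card_univ, Fintype.card_fin, nsmul_eq_mul]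
  have hind : ∀ G : Finset (Fin n), (∑ j, indic G j) = (G.card : ℝ) := by
    intro G
    simp [indic, Finset.sum_boole, Finset.filter_univ_mem]
  -- constants for inner sums
  have hsqc : ∀ i : Fin N, (∑ _j ∈ S i, q) = ((S i).card : ℝ) * q := by
    intro i; rw [Finset.sum_const, nsmul_eq_mul]
  have hppc : ∀ i : Fin N, (∑ j ∈ S i, ∑ _l ∈ (S i).filter (fun l => j < l), q * q)
      = ((∑ j ∈ S i, ((S i).filter (fun l => j < l)).card : ℕ) : ℝ) * (q*q) := by
    intro i
    push_cast
    rw [Finset.sum_mul]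
    refine Finset.sum_congr rfl (fun j _ => ?_)
    rw [Finset.sum_const, nsmul_eq_mul]
  have hKle : ∀ i : Fin N, (∑ j ∈ S i, ((S i).filter (fun l => j < l)).card)
      ≤ (S i).card * (S i).card := by
    intro i
    calc ∑ j ∈ S i, ((S i).filter (fun l => j < l)).card
        ≤ ∑ _j ∈ S i, (S i).card :=
          Finset.sum_le_sum (fun j _ => Finset.card_le_card (Finset.filter_subset _ _))
      _ = (S i).card * (S i).card := by rw [Finset.sum_const, smul_eq_mul]
  -- the expectation computation
  have hEval : ∀ t ∈ Finset.Icc 1 T,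
      ∫ ω, fGen S w p τ T t H (fun j => X t j ω) ∂P = fGen S w p τ T t H (fun _ => q) := by
    intro t ht
    have hmeas' := hmeas t ht
    have h01' := h01 t ht
    have hXint : ∀ j, Integrable (X t j) P := fun j =>
      (integral_eq_of_01 P (X t j) (hmeas' j) (h01' j)).1
    have hXval : ∀ j, ∫ ω, X t j ω ∂P = q := by
      intro j
      rw [(integral_eq_of_01 P (X t j) (hmeas' j) (h01' j)).2, hprob t ht j,
        ENNReal.toReal_ofReal hq0.le]
    have hXXint : ∀ j l : Fin n, Integrable (fun ω => X t j ω * X t l ω) P := by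
      intro j l
      exact (integral_eq_of_01 P _ ((hmeas' j).mul (hmeas' l)) (fun ω => by
        rcases h01' j ω with h|h <;> rcases h01' l ω with h'|h' <;> simp [h, h'])).1
    have hXXval : ∀ j l : Fin n, j ≠ l → ∫ ω, X t j ω * X t l ω ∂P = q * q := by
      intro j l hjl
      calc ∫ ω, X t j ω * X t l ω ∂P = ∫ ω, (X t j * X t l) ω ∂P := rfl
        _ = (∫ ω, X t j ω ∂P) * ∫ ω, X t l ω ∂P :=
          (hindep t ht j l hjl).integral_mul_eq_mul_integral (hXint j).aestronglyMeasurable (hXint l).aestronglyMeasurable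
        _ = q * q := by rw [hXval j, hXval l]
    simp only [fGen, Finset.filter_congr_decidable]
    have hgint : ∀ i : Fin N, Integrable (fun ω => ∑ j ∈ S i, X t j ω) P :=
      fun i => integrable_finset_sum _ (fun j _ => hXint j)
    have hppint : ∀ i : Fin N, Integrable (fun ω =>
        ∑ j ∈ S i, ∑ l ∈ (S i).filter (fun l => j < l), X t j ω * X t l ω) P :=
      fun i => integrable_finset_sum _ (fun j _ => integrable_finset_sum _ (fun l _ => hXXint j l))
    have htermint : ∀ i : Fin N, Integrable (fun ω =>
        (1 - (∑ j ∈ S i, X t j ω - ∑ j ∈ S i, ∑ l ∈ (S i).filter (fun l => j < l),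
          X t j ω * X t l ω)) * w i *
          Real.exp (-((S i).card : ℝ) * ((T - t : ℕ) : ℝ) * p / (T : ℝ))) P :=
      fun i => (((integrable_const 1).sub ((hgint i).sub (hppint i))).mul_const _).mul_const _
    have hAint : Integrable (fun ω =>
        ∑ i ∈ Finset.univ.filter (fun i => ∀ j ∈ Finset.Icc 1 (t - 1), S i ∩ H j = ∅),
          (1 - (∑ j ∈ S i, X t j ω - ∑ j ∈ S i, ∑ l ∈ (S i).filter (fun l => j < l),
            X t j ω * X t l ω)) * w i *
            Real.exp (-((S i).card : ℝ) * ((T - t : ℕ) : ℝ) * p / (T : ℝ))) P :=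
      integrable_finset_sum _ (fun i _ => htermint i)
    have hBint : Integrable (fun ω => (∑ j, X t j ω)
        + (∑ j ∈ Finset.Icc 1 (t - 1), ((H j).card : ℝ))
        + 4 * (n : ℝ) * ((T - t : ℕ) : ℝ) * p / (T : ℝ)) P :=
      ((integrable_finset_sum _ (fun j _ => hXint j)).add (integrable_const _)).add
        (integrable_const _)
    have hB2 : Integrable (fun ω => (∑ j, X t j ω)) P :=
      integrable_finset_sum _ (fun j _ => hXint j)
    have hB1 : Integrable (fun ω => (∑ j, X t j ω)
        + (∑ j ∈ Finset.Icc 1 (t - 1), ((H j).card : ℝ))) P :=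
      hB2.add (integrable_const _)
    rw [integral_add (hAint.div_const τ) (hBint.div_const _), integral_div, integral_div,
      integral_finset_sum _ (fun i _ => htermint i),
      integral_add hB1 (integrable_const _),
      integral_add hB2 (integrable_const _),
      integral_finset_sum _ (fun j _ => hXint j)]
    congr 2
    · refine Finset.sum_congr rfl (fun i _ => ?_)
      have hs1 : ∫ ω, ∑ j ∈ S i, X t j ω ∂P = ∑ j ∈ S i, q := by
        rw [integral_finset_sum _ (fun j _ => hXint j)]
        exact Finset.sum_congr rfl (fun j _ => hXval j)
      have hs2 : ∫ ω, ∑ j ∈ S i, ∑ l ∈ (S i).filter (fun l => j < l), X t j ω * X t l ω ∂P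
          = ∑ j ∈ S i, ∑ l ∈ (S i).filter (fun l => j < l), q * q := by
        rw [integral_finset_sum _ (fun j _ => integrable_finset_sum _ (fun l _ => hXXint j l))]
        refine Finset.sum_congr rfl (fun j _ => ?_)
        rw [integral_finset_sum _ (fun l _ => hXXint j l)]
        refine Finset.sum_congr rfl (fun l hl => ?_)
        exact hXXval j l (ne_of_lt (Finset.mem_filter.1 hl).2)
      have hgp : Integrable (fun ω => ∑ j ∈ S i, X t j ω
          - ∑ j ∈ S i, ∑ l ∈ (S i).filter (fun l => j < l), X t j ω * X t l ω) P :=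
        (hgint i).sub (hppint i)
      rw [integral_mul_const, integral_mul_const,
        integral_sub (integrable_const 1) hgp,
        integral_sub (hgint i) (hppint i), hs1, hs2, integral_const]
      simp [measure_univ]
    · rw [Finset.sum_congr rfl (fun j _ => hXval j), integral_const, integral_const]
      simp [measure_univ]
  -- cast identity
  have hTt : ∀ t : ℕ, 1 ≤ t → t + 1 ≤ T →
      ((T - t : ℕ):ℝ) = ((T - (t+1) : ℕ):ℝ) + 1 := by
    intro t _ h
    have h2 : T - t = (T - (t+1)) + 1 := by omega
    rw [h2]; push_cast; ring
  -- step inequality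
  have hstep : ∀ t : ℕ, 1 ≤ t → t + 1 ≤ T →
      fGen S w p τ T (t+1) H (fun _ => q) ≤ fGen S w p τ T t H (indic (H t)) := by
    intro t ht1 htT
    simp only [fGen, Nat.add_sub_cancel, Finset.filter_congr_decidable]
    have hCs : ∑ j ∈ Finset.Icc 1 t, ((H j).card:ℝ)
        = (∑ j ∈ Finset.Icc 1 (t-1), ((H j).card:ℝ)) + ((H t).card:ℝ) := by
      have htt : t = (t-1)+1 := by omega
      calc ∑ j ∈ Finset.Icc 1 t, ((H j).card:ℝ)
          = ∑ j ∈ Finset.Icc 1 ((t-1)+1), ((H j).card:ℝ) := by rw [← htt]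
        _ = (∑ j ∈ Finset.Icc 1 (t-1), ((H j).card:ℝ)) + ((H ((t-1)+1)).card:ℝ) :=
            Finset.sum_Icc_succ_top (by omega) _
        _ = (∑ j ∈ Finset.Icc 1 (t-1), ((H j).card:ℝ)) + ((H t).card:ℝ) := by rw [← htt]
    have h2eq : ((∑ _j : Fin n, q) + (∑ j ∈ Finset.Icc 1 t, ((H j).card:ℝ))
          + 4*(n:ℝ)*((T-(t+1):ℕ):ℝ)*p/(T:ℝ)) / (4*(n:ℝ)*p)
        = ((∑ j, indic (H t) j) + (∑ j ∈ Finset.Icc 1 (t-1), ((H j).card:ℝ))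
          + 4*(n:ℝ)*((T-t:ℕ):ℝ)*p/(T:ℝ)) / (4*(n:ℝ)*p) := by
      rw [hqsum, hind (H t), hCs, hTt t ht1 htT, hq]
      field_simp
      ring
    rw [h2eq]
    apply add_le_add _ le_rfl
    rw [div_le_div_iff_of_pos_right hτpos]
    refine le_trans (Finset.sum_le_sum (fun i hi => ?_))
      (Finset.sum_le_sum_of_subset_of_nonneg ?_ ?_)
    · -- termwise
      have hiS : ∀ j ∈ Finset.Icc 1 t, S i ∩ H j = ∅ := (Finset.mem_filter.1 hi).2
      have hHt : S i ∩ H t = ∅ := hiS t (Finset.mem_Icc.2 ⟨ht1, le_rfl⟩)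
      have hzero : ∀ j ∈ S i, indic (H t) j = 0 := by
        intro j hj
        by_cases hjH : j ∈ H t
        · exact absurd (hHt ▸ Finset.mem_inter.2 ⟨hj, hjH⟩) (Finset.notMem_empty j)
        · simp [indic, hjH]
      have hY := Y_zero (S i) (indic (H t)) hzero
      rw [hY, hsqc i, hppc i]
      have hexp : Real.exp (-((S i).card:ℝ) * ((T-t:ℕ):ℝ) * p / (T:ℝ))
          = Real.exp (-(((S i).card:ℝ)*q/4)) *
            Real.exp (-((S i).card:ℝ) * ((T-(t+1):ℕ):ℝ) * p / (T:ℝ)) := by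
        rw [← Real.exp_add]
        congr 1
        rw [hTt t ht1 htT, hq]
        field_simp
        ring
      rw [hexp, sub_zero]
      have hkey := key_ineq (S i).card _ q hq0.le (hKle i) (hmq i)
      have hwE : 0 ≤ w i * Real.exp (-((S i).card:ℝ) * ((T-(t+1):ℕ):ℝ) * p / (T:ℝ)) :=
        mul_nonneg (hw i) (Real.exp_pos _).le
      nlinarith [mul_le_mul_of_nonneg_right hkey hwE]
    · -- subset
      intro i hi
      simp only [Finset.mem_filter] at hi ⊢
      exact ⟨hi.1, fun j hj => hi.2 j (Finset.Icc_subset_Icc_right (by omega) hj)⟩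
    · -- nonneg
      intro i _ _
      exact mul_nonneg (mul_nonneg (Y_bound (S i) (indic (H t)) (indic01 (H t))) (hw i))
        (Real.exp_pos _).le
  -- base case
  have hbase : fGen S w p τ T 1 H (fun _ => q) ≤ 2 := by
    simp only [fGen, Finset.filter_congr_decidable]
    have hIcc : Finset.Icc 1 (1-1) = (∅ : Finset ℕ) := by
      rw [show (1:ℕ)-1 = 0 from rfl]
      exact Finset.Icc_eq_empty (by omega)
    have h2 : ((∑ _j : Fin n, q) + (∑ j ∈ Finset.Icc 1 (1-1), ((H j).card:ℝ))
        + 4*(n:ℝ)*((T-1:ℕ):ℝ)*p/(T:ℝ)) / (4*(n:ℝ)*p) = 1 := by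
      rw [hIcc, Finset.sum_empty, hqsum, hq, Nat.cast_sub hT1]
      field_simp
      ring
    rw [h2]
    have hkey2 : ∀ A : ℝ, A ≤ τ → A/τ + 1 ≤ 2 := by
      intro A hA
      have := (div_le_one hτpos).2 hA
      linarith
    apply hkey2
    rw [hτ]
    refine le_trans (Finset.sum_le_sum (fun i hi => ?_))
      (Finset.sum_le_sum_of_subset_of_nonneg (fun i _ => Finset.mem_univ i)
        (fun i _ _ => mul_nonneg (hw i) (Real.exp_pos _).le))
    rw [hsqc i, hppc i]
    have hexp : Real.exp (-((S i).card:ℝ) * p)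
        = Real.exp (-(((S i).card:ℝ)*q/4)) *
          Real.exp (-((S i).card:ℝ) * ((T-1:ℕ):ℝ) * p / (T:ℝ)) := by
      rw [← Real.exp_add]
      congr 1
      rw [Nat.cast_sub hT1, hq]
      field_simp
      ring
    rw [hexp]
    have hkey := key_ineq (S i).card _ q hq0.le (hKle i) (hmq i)
    have hwE : 0 ≤ w i * Real.exp (-((S i).card:ℝ) * ((T-1:ℕ):ℝ) * p / (T:ℝ)) :=
      mul_nonneg (hw i) (Real.exp_pos _).le
    nlinarith [mul_le_mul_of_nonneg_right hkey hwE]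
  -- chain
  have hchain : ∀ t, 1 ≤ t → t ≤ T → fGen S w p τ T t H (indic (H t)) ≤ 2 := by
    intro t
    induction t with
    | zero => intro h; omega
    | succ k ih =>
      intro _ hkT
      by_cases hk : k = 0
      · subst hk
        calc fGen S w p τ T 1 H (indic (H 1))
            ≤ ∫ ω, fGen S w p τ T 1 H (fun j => X 1 j ω) ∂P :=
              hgood 1 (Finset.mem_Icc.2 ⟨le_rfl, hkT⟩)
          _ = fGen S w p τ T 1 H (fun _ => q) := hEval 1 (Finset.mem_Icc.2 ⟨le_rfl, hkT⟩)
          _ ≤ 2 := hbase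
      · have hk1 : 1 ≤ k := by omega
        have hmem : k + 1 ∈ Finset.Icc 1 T := Finset.mem_Icc.2 ⟨by omega, hkT⟩
        calc fGen S w p τ T (k+1) H (indic (H (k+1)))
            ≤ ∫ ω, fGen S w p τ T (k+1) H (fun j => X (k+1) j ω) ∂P := hgood (k+1) hmem
          _ = fGen S w p τ T (k+1) H (fun _ => q) := hEval (k+1) hmem
          _ ≤ fGen S w p τ T k H (indic (H k)) := hstep k hk1 hkT
          _ ≤ 2 := ih hk1 (by omega)
  -- final assembly
  have hgoal1 : (∑ i ∈ Finset.univ.filter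
        (fun i => ((Finset.Icc 1 T).biUnion H) ∩ S i = ∅), w i) / τ +
      ((((Finset.Icc 1 T).biUnion H).card : ℝ)) / (4 * (n : ℝ) * p) ≤
        fGen S w p τ T T H (indic (H T)) := by
    unfold fGen
    have hdisjHT : ∀ i : Fin N, ((Finset.Icc 1 T).biUnion H) ∩ S i = ∅ →
        ∀ j ∈ Finset.Icc 1 T, S i ∩ H j = ∅ := by
      intro i hi j hj
      rw [Finset.eq_empty_iff_forall_notMem]
      intro a ha
      have h1 := Finset.mem_inter.1 ha
      have h2 : a ∈ ((Finset.Icc 1 T).biUnion H) ∩ S i :=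
        Finset.mem_inter.2 ⟨Finset.mem_biUnion.2 ⟨j, hj, h1.2⟩, h1.1⟩
      rw [hi] at h2
      exact Finset.notMem_empty a h2
    apply add_le_add
    · rw [div_le_div_iff_of_pos_right hτpos]
      refine le_trans (le_of_eq (Finset.sum_congr rfl (fun i hi => ?_)))
        (Finset.sum_le_sum_of_subset_of_nonneg ?_ ?_)
      · have hi2 := (Finset.mem_filter.1 hi).2
        have hHT : S i ∩ H T = ∅ := hdisjHT i hi2 T (Finset.mem_Icc.2 ⟨hT1, le_rfl⟩)
        have hzero : ∀ j ∈ S i, indic (H T) j = 0 := by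
          intro j hj
          by_cases hjH : j ∈ H T
          · exact absurd (hHT ▸ Finset.mem_inter.2 ⟨hj, hjH⟩) (Finset.notMem_empty j)
          · simp [indic, hjH]
        have hY := Y_zero (S i) (indic (H T)) hzero
        have hexp1 : Real.exp (-((S i).card : ℝ) * ((T - T : ℕ) : ℝ) * p / (T : ℝ)) = 1 := by
          simp
        rw [hY, sub_zero, one_mul, hexp1, mul_one]
      · intro i hi
        simp only [Finset.mem_filter] at hi ⊢
        exact ⟨hi.1, fun j hj =>
          hdisjHT i hi.2 j (Finset.Icc_subset_Icc_right (by omega) hj)⟩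
      · intro i _ _
        exact mul_nonneg (mul_nonneg (Y_bound (S i) (indic (H T)) (indic01 (H T))) (hw i))
          (Real.exp_pos _).le
    · rw [div_le_div_iff_of_pos_right hDpos]
      have hU : ((((Finset.Icc 1 T).biUnion H).card : ℕ) : ℝ)
          ≤ ∑ j ∈ Finset.Icc 1 T, ((H j).card:ℝ) := by
        have := Finset.card_biUnion_le (s := Finset.Icc 1 T) (t := H)
        push_cast
        exact_mod_cast this
      have hCs : ∑ j ∈ Finset.Icc 1 T, ((H j).card:ℝ)
          = (∑ j ∈ Finset.Icc 1 (T-1), ((H j).card:ℝ)) + ((H T).card:ℝ) := by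
        have htt : T = (T-1)+1 := by omega
        calc ∑ j ∈ Finset.Icc 1 T, ((H j).card:ℝ)
            = ∑ j ∈ Finset.Icc 1 ((T-1)+1), ((H j).card:ℝ) := by rw [← htt]
          _ = (∑ j ∈ Finset.Icc 1 (T-1), ((H j).card:ℝ)) + ((H ((T-1)+1)).card:ℝ) :=
              Finset.sum_Icc_succ_top (by omega) _
          _ = (∑ j ∈ Finset.Icc 1 (T-1), ((H j).card:ℝ)) + ((H T).card:ℝ) := by rw [← htt]
      have hTT : ((T - T : ℕ):ℝ) = 0 := by simp
      rw [hind (H T), hTT]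
      rw [hCs] at hU
      have : 4*(n:ℝ)*0*p/(T:ℝ) = 0 := by ring
      rw [this, add_zero]
      linarith
  refine ⟨hgoal1, ?_, ?_⟩
  all_goals {
    have h2 := hchain T hT1 le_rfl
    have hA : 0 ≤ (∑ i ∈ Finset.univ.filter
        (fun i => ((Finset.Icc 1 T).biUnion H) ∩ S i = ∅), w i) / τ :=
      div_nonneg (Finset.sum_nonneg (fun i _ => hw i)) hτpos.le
    have hB : 0 ≤ ((((Finset.Icc 1 T).biUnion H).card : ℝ)) / (4 * (n : ℝ) * p) :=
      div_nonneg (Nat.cast_nonneg _) hDpos.le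
    have hle := le_trans hgoal1 h2
    first
    | · have : (∑ i ∈ Finset.univ.filter
            (fun i => ((Finset.Icc 1 T).biUnion H) ∩ S i = ∅), w i) / τ ≤ 2 := by linarith
        rw [div_le_iff₀ hτpos] at this
        linarith
    | · have : ((((Finset.Icc 1 T).biUnion H).card : ℝ)) / (4 * (n : ℝ) * p) ≤ 2 := by linarith
        rw [div_le_iff₀ hDpos] at this
        linarith }
end

section
/- (Reduction from hitting ordered sets, single-set cost bounds.) Let n, m ≥ 1, let π : {1,…,m} → {1,…,n} be injective, and let ℓ = ⌊log₂ m⌋. Define the prefix sets P_j = {π(1),…,π(2^j)} for 0 ≤ j ≤ ℓ and P_{ℓ+1} = {π(1),…,π(m)}. For H ⊆ {1,…,n} define the ordered cost c₁(H) = k − 1 if k is the least index with π(k) ∈ H, and c₁(H) = m if no π(k) lies in H; and define c₂(H) = ∑_{j=0}^{ℓ+1} |P_j|·1[H ∩ P_j = ∅]. Then c₁(H) ≤ c₂(H) ≤ 3·c₁(H). -/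
/-!
Let `c` be the number of elements of the ordered set before the first one in `H` (or `m`).
A prefix of length `a ≤ m` misses `H` exactly when `a ≤ c`, so the dyadic prefixes contribute
`∑_{2^j ≤ c} 2^j = 2^{size c} - 1`, which lies between `c` and `2c` because
`2^{size c - 1} ≤ c < 2^{size c}`; the full prefix contributes `m = c` if `H` is missed
entirely and nothing otherwise.
-/

open Finset

namespace Nat

theorem sum_range_ite_two_pow_le (k N : ℕ) (hk : k < 2 ^ N) :
    ∑ j ∈ range N, (if 2 ^ j ≤ k then 2 ^ j else 0) = 2 ^ size k - 1 := by
  have hsize : size k ≤ N := size_le.2 hk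
  simp_rw [← lt_size]
  rw [← sum_filter, show (range N).filter (· < size k) = range (size k) by ext; simp; omega,
    geomSum_eq le_rfl]
  simp

theorem le_two_pow_size_sub_one (k : ℕ) : k ≤ 2 ^ size k - 1 := by
  have := lt_size_self k
  omega

theorem two_pow_size_sub_one_le (k : ℕ) : 2 ^ size k - 1 ≤ 2 * k := by
  rcases h : size k with _ | s
  · simp
  · have : 2 ^ s ≤ k := lt_size.1 (by omega)
    rw [pow_succ]
    omega

end Nat

section FirstHit

variable {α : Type*} [DecidableEq α] {m : ℕ}

/-- Indices are 0-based, so this is the number of elements of `π` preceding the first hit. -/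
def firstHit (π : Fin m → α) (H : Finset α) : ℕ :=
  if h : (univ.filter fun i => π i ∈ H).Nonempty then ((univ.filter fun i => π i ∈ H).min' h : ℕ)
  else m

def prefixImage (π : Fin m → α) (a : ℕ) : Finset α :=
  (univ.filter fun i : Fin m => (i : ℕ) < a).image π

theorem firstHit_le (π : Fin m → α) (H : Finset α) : firstHit π H ≤ m := by
  unfold firstHit
  split_ifs with h
  · exact (Finset.min' _ h).isLt.le
  · exact le_rfl

theorem le_firstHit_iff {π : Fin m → α} {H : Finset α} {a : ℕ} (ha : a ≤ m) :
    a ≤ firstHit π H ↔ ∀ i : Fin m, (i : ℕ) < a → π i ∉ H := by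
  unfold firstHit
  split_ifs with h
  · constructor
    · intro hak i hia hiH
      have := (univ.filter fun i => π i ∈ H).min'_le i (by simpa using hiH)
      omega
    · intro hmiss
      by_contra! hlt
      have hmem := (univ.filter fun i => π i ∈ H).min'_mem h
      exact hmiss _ hlt (mem_filter.1 hmem).2
  · simp only [ha, true_iff]
    intro i _ hiH
    exact h ⟨i, by simpa using hiH⟩

theorem card_prefixImage {π : Fin m → α} (hπ : Function.Injective π) {a : ℕ} (ha : a ≤ m) :
    (prefixImage π a).card = a := by
  rw [prefixImage, card_image_of_injective _ hπ, Fin.card_filter_val_lt, min_eq_right ha]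

theorem inter_prefixImage_eq_empty_iff {π : Fin m → α} {H : Finset α} {a : ℕ} (ha : a ≤ m) :
    H ∩ prefixImage π a = ∅ ↔ a ≤ firstHit π H := by
  rw [le_firstHit_iff ha, ← disjoint_iff_inter_eq_empty, disjoint_right, prefixImage]
  simp

theorem prefixImage_cost_eq {π : Fin m → α} (hπ : Function.Injective π) (H : Finset α) {a : ℕ}
    (ha : a ≤ m) :
    (if H ∩ prefixImage π a = ∅ then (prefixImage π a).card else 0) =
      if a ≤ firstHit π H then a else 0 := by
  simp only [inter_prefixImage_eq_empty_iff ha, card_prefixImage hπ ha]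

theorem prefixImage_self (π : Fin m → α) : prefixImage π m = univ.image π := by
  simp [prefixImage]

end FirstHit

theorem stmt14_general (n m : ℕ) (hm : 1 ≤ m)
    (π : Fin m → Fin n) (hπ : Function.Injective π)
    (ℓ : ℕ) (hℓ : ℓ = Nat.log 2 m)
    (P : ℕ → Finset (Fin n))
    (hP : ∀ j ≤ ℓ, P j = (Finset.univ.filter (fun i : Fin m => (i : ℕ) < 2 ^ j)).image π)
    (hPtop : P (ℓ + 1) = Finset.univ.image π)
    (H : Finset (Fin n))
    (c₁ : ℕ)
    (hc₁ : c₁ = if h : (Finset.univ.filter (fun i : Fin m => π i ∈ H)).Nonempty then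
        (((Finset.univ.filter (fun i : Fin m => π i ∈ H)).min' h : Fin m) : ℕ)
      else m)
    (c₂ : ℕ)
    (hc₂ : c₂ = ∑ j ∈ Finset.range (ℓ + 2), if H ∩ P j = ∅ then (P j).card else 0) :
    c₁ ≤ c₂ ∧ c₂ ≤ 3 * c₁ := by
  change c₁ = firstHit π H at hc₁
  have h2ℓ : 2 ^ ℓ ≤ m := hℓ ▸ Nat.pow_log_le_self 2 (by omega)
  have hc₁m : c₁ < 2 ^ (ℓ + 1) :=
    (hc₁ ▸ firstHit_le π H).trans_lt (hℓ ▸ Nat.lt_pow_succ_log_self one_lt_two m)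
  have hdyadic : ∀ j ∈ range (ℓ + 1),
      (if H ∩ P j = ∅ then (P j).card else 0) = if 2 ^ j ≤ c₁ then 2 ^ j else 0 := fun j hj => by
    have hj : j ≤ ℓ := Nat.lt_succ_iff.1 (mem_range.1 hj)
    rw [hP j hj, hc₁, ← prefixImage_cost_eq hπ H ((Nat.pow_le_pow_right two_pos hj).trans h2ℓ)]
    rfl
  have htop : (if H ∩ P (ℓ + 1) = ∅ then (P (ℓ + 1)).card else 0) = if m ≤ c₁ then m else 0 := by
    rw [hPtop, ← prefixImage_self, hc₁, prefixImage_cost_eq hπ H le_rfl]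
  rw [hc₂, sum_range_succ, sum_congr rfl hdyadic, Nat.sum_range_ite_two_pow_le _ _ hc₁m, htop]
  have := Nat.le_two_pow_size_sub_one c₁
  have := Nat.two_pow_size_sub_one_le c₁
  split_ifs <;> omega

/-- Reduction from hitting ordered sets, single-set cost bounds: with
`ℓ = ⌊log₂ m⌋`, prefix sets `P_j = {π(1),…,π(2^j)}` for `j ≤ ℓ` and
`P_{ℓ+1} = {π(1),…,π(m)}`, ordered cost `c₁(H)` (the number of elements of the
ordered set strictly before the first hit element, or `m` if none is hit) and
`c₂(H) = ∑_{j=0}^{ℓ+1} |P_j|·1[H ∩ P_j = ∅]`, one has `c₁(H) ≤ c₂(H) ≤ 3·c₁(H)`. -/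
theorem stmt14 (n m : ℕ) (hn : 1 ≤ n) (hm : 1 ≤ m)
    (π : Fin m → Fin n) (hπ : Function.Injective π)
    (ℓ : ℕ) (hℓ : ℓ = Nat.log 2 m)
    (P : ℕ → Finset (Fin n))
    (hP : ∀ j ≤ ℓ, P j = (Finset.univ.filter (fun i : Fin m => (i : ℕ) < 2 ^ j)).image π)
    (hPtop : P (ℓ + 1) = Finset.univ.image π)
    (H : Finset (Fin n))
    (c₁ : ℕ)
    (hc₁ : c₁ = if h : (Finset.univ.filter (fun i : Fin m => π i ∈ H)).Nonempty then
        (((Finset.univ.filter (fun i : Fin m => π i ∈ H)).min' h : Fin m) : ℕ)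
      else m)
    (c₂ : ℕ)
    (hc₂ : c₂ = ∑ j ∈ Finset.range (ℓ + 2), if H ∩ P j = ∅ then (P j).card else 0) :
    c₁ ≤ c₂ ∧ c₂ ≤ 3 * c₁ :=
  stmt14_general n m hm π hπ ℓ hℓ P hP hPtop H c₁ hc₁ c₂ hc₂
end

section
/- (Total size of bad clusters.) Let G be a finite connected simple graph with vertex set V, let x ≥ 2 be an integer, and let C₁,…,C_t ⊆ V be nonempty sets with d(C_j, C_{j'}) ≥ 10x for all j ≠ j'. Suppose each C_j is bad, i.e. for every integer i with 0 ≤ i < 3x one has |C_j^{≤ i+1}| > (3/2)·|C_j^{≤ i}|. Then ∑_{j=1}^t |C_j| ≤ |V| / 2^{x+1}. -/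
/-- `C^{≤D} = {v ∈ V : d(C,{v}) ≤ D}`, the `D`-neighborhood of the set `C`. -/
noncomputable def ballF {V : Type*} [Fintype V]
    (G : SimpleGraph V) (C : Finset V) (D : ℕ) : Finset V :=
  Finset.univ.filter (fun v => ∃ c ∈ C, G.dist c v ≤ D)

lemma ballF_subset {V : Type*} [Fintype V] (G : SimpleGraph V) (C : Finset V) (D : ℕ) :
    C ⊆ ballF G C D := by
  intro v hv
  simp only [ballF, Finset.mem_filter, Finset.mem_univ, true_and]
  exact ⟨v, hv, by rw [SimpleGraph.dist_self]; exact Nat.zero_le _⟩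

lemma pow_ineq : ∀ x : ℕ, 2 ≤ x → (2 : ℝ) ^ (x + 1) ≤ (3 / 2) ^ (3 * x) := by
  intro x hx
  induction x, hx using Nat.le_induction with
  | base => norm_num
  | succ n hn ih =>
      have : (3:ℝ)/2 ^ 3 ≥ 0 := by positivity
      calc (2:ℝ) ^ (n + 1 + 1) = 2 ^ (n+1) * 2 := by ring
        _ ≤ (3/2) ^ (3*n) * (3/2)^3 := by
            apply mul_le_mul ih (by norm_num) (by norm_num) (by positivity)
        _ = (3/2) ^ (3*(n+1)) := by ring_nf
        
/-- Total size of bad clusters: if the nonempty clusters `C_1,…,C_t` are pairwise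
at distance at least `10x` and each is bad (i.e. `|C_j^{≤i+1}| > (3/2)·|C_j^{≤i}|`
for all `0 ≤ i < 3x`), then `∑_j |C_j| ≤ |V|/2^{x+1}`. -/
theorem stmt18 {V : Type*} [Fintype V] (G : SimpleGraph V) (hG : G.Connected)
    (x : ℕ) (hx : 2 ≤ x) (t : ℕ) (C : Fin t → Finset V)
    (hne : ∀ j, (C j).Nonempty)
    (hsep : ∀ j j' : Fin t, j ≠ j' → ∀ a ∈ C j, ∀ b ∈ C j', 10 * x ≤ G.dist a b)
    (hbad : ∀ j : Fin t, ∀ i < 3 * x,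
      (3 : ℝ) / 2 * ((ballF G (C j) i).card : ℝ) < ((ballF G (C j) (i + 1)).card : ℝ)) :
    (∑ j, ((C j).card : ℝ)) ≤ (Fintype.card V : ℝ) / 2 ^ (x + 1) := by
  -- growth: (3/2)^i * |C j| ≤ |ballF (C j) i| for i ≤ 3x
  have growth : ∀ j : Fin t, ∀ i ≤ 3 * x,
      ((3:ℝ)/2) ^ i * ((C j).card : ℝ) ≤ ((ballF G (C j) i).card : ℝ) := by
    intro j i
    induction i with
    | zero =>
        intro _
        simpa using (Nat.cast_le.mpr (Finset.card_le_card (ballF_subset G (C j) 0)) :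
          ((C j).card : ℝ) ≤ _)
    | succ n ih =>
        intro hn
        have h1 : n ≤ 3 * x := Nat.le_of_succ_le hn
        have h2 := hbad j n (Nat.lt_of_succ_le hn)
        have := ih h1
        calc ((3:ℝ)/2) ^ (n+1) * ((C j).card : ℝ)
            = (3/2) * ((3/2)^n * ((C j).card : ℝ)) := by ring
          _ ≤ (3/2) * ((ballF G (C j) n).card : ℝ) := by linarith
          _ ≤ ((ballF G (C j) (n+1)).card : ℝ) := le_of_lt h2
  -- disjointness of balls of radius 3x
  have hdisj : ∀ j j' : Fin t, j ≠ j' →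
      Disjoint (ballF G (C j) (3*x)) (ballF G (C j') (3*x)) := by
    intro j j' hjj'
    rw [Finset.disjoint_left]
    intro v hv hv'
    simp only [ballF, Finset.mem_filter, Finset.mem_univ, true_and] at hv hv'
    obtain ⟨c, hc, hdc⟩ := hv
    obtain ⟨c', hc', hdc'⟩ := hv'
    have h10 := hsep j j' hjj' c hc c' hc'
    have htri : G.dist c c' ≤ G.dist c v + G.dist v c' := hG.dist_triangle
    have hcomm : G.dist v c' = G.dist c' v := SimpleGraph.dist_comm
    rw [hcomm] at htri
    omega
  -- sum of ball cards ≤ |V|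
  classical
  have hsum : (∑ j, ((ballF G (C j) (3*x)).card : ℝ)) ≤ (Fintype.card V : ℝ) := by
    rw [← Nat.cast_sum]
    have := Finset.card_biUnion (s := (Finset.univ : Finset (Fin t)))
      (t := fun j => ballF G (C j) (3*x)) (fun j _ j' _ h => hdisj j j' h)
    rw [← this]
    exact_mod_cast Nat.cast_le.mpr (Finset.card_le_card (Finset.subset_univ _)) |>.trans
      (by simp [Finset.card_univ])
  have hpow : (0:ℝ) < ((3:ℝ)/2) ^ (3*x) := by positivity
  have key : ((3:ℝ)/2) ^ (3*x) * (∑ j, ((C j).card : ℝ)) ≤ (Fintype.card V : ℝ) := by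
    rw [Finset.mul_sum]
    exact le_trans (Finset.sum_le_sum fun j _ => growth j (3*x) le_rfl) hsum
  have h2 : (0:ℝ) < (2:ℝ) ^ (x+1) := by positivity
  rw [le_div_iff₀ h2]
  calc (∑ j, ((C j).card : ℝ)) * 2 ^ (x+1)
      ≤ (∑ j, ((C j).card : ℝ)) * (3/2) ^ (3*x) := by
        apply mul_le_mul_of_nonneg_left (pow_ineq x hx)
        positivity
    _ = (3/2) ^ (3*x) * (∑ j, ((C j).card : ℝ)) := by ring
    _ ≤ (Fintype.card V : ℝ) := key
end
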